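/- arXiv:1901.10774 — 3 statements merged into one kernel-verified Lean document; each statement's English description precedes it below -/
import Mathlib

section
/- The discriminant of the quartic polynomial z^4 + (μ-2(λ+1))z^3 + (2(λ^2+λ+1)-μ(λ+1))z^2 + (λμ-2λ(λ+1))z + λ^2 in z equals λ^2 (λ-1)^2 (μ-2+2λ)^2 (μ-2-2λ)^2 (μ+2-2λ)^2. -/
/-!
Expanding `(z - z₁)(z - z₂)(z - z₃)(z - z₄)` identifies the coefficients of the quartic with the
elementary symmetric functions of its roots (up to sign), and the product of the squared root
differences is the classical discriminant polynomial in those coefficients. Substituting the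
given coefficients, that polynomial in `λ, μ` factors as claimed.
-/

/-- The discriminant of the monic quartic `z^4 + b z^3 + c z^2 + d z + e`. -/
def quarticDiscr {R : Type*} [CommRing R] (b c d e : R) : R :=
  256*e^3 - 192*b*d*e^2 - 128*c^2*e^2 + 144*c*d^2*e - 27*d^4
    + 144*b^2*c*e^2 - 6*b^2*d^2*e - 80*b*c^2*d*e + 18*b*c*d^3 + 16*c^4*e - 4*c^3*d^2
    - 27*b^4*e^2 + 18*b^3*c*d*e - 4*b^3*d^3 - 4*b^2*c^3*e + b^2*c^2*d^2

theorem prod_sq_sub_eq_quarticDiscr {R : Type*} [CommRing R] (z₁ z₂ z₃ z₄ : R) :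
    (z₁ - z₂)^2 * (z₁ - z₃)^2 * (z₁ - z₄)^2 * (z₂ - z₃)^2 * (z₂ - z₄)^2 * (z₃ - z₄)^2
      = quarticDiscr (-(z₁ + z₂ + z₃ + z₄)) (z₁*z₂ + z₁*z₃ + z₁*z₄ + z₂*z₃ + z₂*z₄ + z₃*z₄)
          (-(z₁*z₂*z₃ + z₁*z₂*z₄ + z₁*z₃*z₄ + z₂*z₃*z₄)) (z₁*z₂*z₃*z₄) := by
  unfold quarticDiscr
  ring

theorem quartic_vieta {K : Type*} [Field K] [CharZero K] {b c d e z₁ z₂ z₃ z₄ : K}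
    (h : ∀ z, z^4 + b*z^3 + c*z^2 + d*z + e = (z - z₁)*(z - z₂)*(z - z₃)*(z - z₄)) :
    b = -(z₁ + z₂ + z₃ + z₄) ∧
    c = z₁*z₂ + z₁*z₃ + z₁*z₄ + z₂*z₃ + z₂*z₄ + z₃*z₄ ∧
    d = -(z₁*z₂*z₃ + z₁*z₂*z₄ + z₁*z₃*z₄ + z₂*z₃*z₄) ∧
    e = z₁*z₂*z₃*z₄ := by
  -- Lagrange interpolation at the nodes `0, ±1, ±2`.
  have h0 := h 0
  have h1 := h 1
  have hm1 := h (-1)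
  have h2 := h 2
  have hm2 := h (-2)
  refine ⟨?_, ?_, ?_, ?_⟩
  · linear_combination (-1/12 : K) * hm2 + (1/6 : K) * hm1 - (1/6 : K) * h1 + (1/12 : K) * h2
  · linear_combination (-1/24 : K) * hm2 + (2/3 : K) * hm1 - (5/4 : K) * h0 + (2/3 : K) * h1
      - (1/24 : K) * h2
  · linear_combination (1/12 : K) * hm2 - (2/3 : K) * hm1 + (2/3 : K) * h1 - (1/12 : K) * h2
  · linear_combination h0

/-- The discriminant of the quartic
`z^4 + (μ-2(λ+1))z^3 + (2(λ^2+λ+1)-μ(λ+1))z^2 + (λμ-2λ(λ+1))z + λ^2`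
(computed as the product of squared differences of its roots) equals
`λ^2 (λ-1)^2 (μ-2+2λ)^2 (μ-2-2λ)^2 (μ+2-2λ)^2`. -/
theorem stmt_0 (lam mu : ℂ) (z₁ z₂ z₃ z₄ : ℂ)
    (hfac : ∀ z : ℂ,
      z^4 + (mu - 2*(lam+1))*z^3 + (2*(lam^2+lam+1) - mu*(lam+1))*z^2
        + (lam*mu - 2*lam*(lam+1))*z + lam^2
      = (z - z₁)*(z - z₂)*(z - z₃)*(z - z₄)) :
    (z₁ - z₂)^2 * (z₁ - z₃)^2 * (z₁ - z₄)^2 * (z₂ - z₃)^2 * (z₂ - z₄)^2 * (z₃ - z₄)^2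
      = lam^2 * (lam-1)^2 * (mu - 2 + 2*lam)^2 * (mu - 2 - 2*lam)^2 * (mu + 2 - 2*lam)^2 := by
  obtain ⟨hb, hc, hd, he⟩ := quartic_vieta hfac
  rw [prod_sq_sub_eq_quarticDiscr, ← hb, ← hc, ← hd, ← he]
  unfold quarticDiscr
  ring
end

section
/- Let λ, μ be complex numbers with λ ∉ {0,1}. The quartic polynomial z^4 + (μ-2(λ+1))z^3 + (2(λ^2+λ+1)-μ(λ+1))z^2 + (λμ-2λ(λ+1))z + λ^2 has a multiple root if and only if μ = 2(1-λ), μ = 2(1+λ), or μ = 2(λ-1). -/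
open Polynomial

private lemma dbl_eval {p : ℂ[X]} {z : ℂ} (h : (X - C z)^2 ∣ p) :
    p.eval z = 0 ∧ p.derivative.eval z = 0 := by
  obtain ⟨q, rfl⟩ := h
  constructor
  · simp
  · simp [derivative_mul, derivative_pow]

-- If one quadratic factor has z as double root, then mu = 2(1+lam).
private lemma aux_case (lam mu A B z : ℂ) (h1 : lam ≠ 1)
    (hsum : A + B = mu) (hprod : A * B = (lam - 1)^2)
    (e1 : z^2 - (lam + 1 - A) * z + lam = 0)
    (e2 : 2 * z - (lam + 1 - A) = 0) : mu = 2 * (1 + lam) := by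
  have hz2 : lam = z^2 := by linear_combination e1 - z * e2
  have hA : A = (z - 1)^2 := by linear_combination e2 + hz2
  have hzne : z ≠ 1 := fun hzz => h1 (by rw [hz2, hzz]; ring)
  have hAne : A ≠ 0 := by
    rw [hA]; exact pow_ne_zero _ (sub_ne_zero.mpr hzne)
  have hB : B = (z + 1)^2 := by
    have : A * B = A * (z + 1)^2 := by
      rw [hprod, hA, hz2]; ring
    exact mul_left_cancel₀ hAne this
  rw [← hsum, hA, hB, hz2]; ring

/-- The quartic has a multiple root iff `μ = 2(1-λ)`, `μ = 2(1+λ)` or `μ = 2(λ-1)`. -/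
theorem stmt_1 (lam mu : ℂ) (h0 : lam ≠ 0) (h1 : lam ≠ 1) :
    (∃ z : ℂ, (X - C z)^2 ∣
      (X^4 + C (mu - 2*(lam+1)) * X^3 + C (2*(lam^2+lam+1) - mu*(lam+1)) * X^2
        + C (lam*mu - 2*lam*(lam+1)) * X + C (lam^2) : ℂ[X]))
    ↔ mu = 2*(1-lam) ∨ mu = 2*(1+lam) ∨ mu = 2*(lam-1) := by
  constructor
  · rintro ⟨z, hz⟩
    -- get A, B with A + B = mu, A * B = (lam-1)^2
    obtain ⟨A, hA⟩ : ∃ A : ℂ, (X^2 - C mu * X + C ((lam-1)^2)).IsRoot A := by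
      apply Complex.exists_root
      have : (X^2 - C mu * X + C ((lam-1)^2) : ℂ[X]).degree = 2 := by
        compute_degree!
      rw [this]; norm_num
    set B : ℂ := mu - A with hBdef
    have hsum : A + B = mu := by ring
    have hprod : A * B = (lam - 1)^2 := by
      simp only [IsRoot, eval_add, eval_sub, eval_pow, eval_mul, eval_C, eval_X] at hA
      linear_combination -hA
    set p₁ : ℂ[X] := X^2 - C (lam + 1 - A) * X + C lam with hp₁
    set p₂ : ℂ[X] := X^2 - C (lam + 1 - B) * X + C lam with hp₂
    have hsumC : (C A + C B : ℂ[X]) = C mu := by rw [← C_add, hsum]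
    have hprodC : (C A * C B : ℂ[X]) = (C lam - 1)^2 := by
      rw [← C_mul, hprod]; push_cast [map_pow, map_sub, map_one]; ring
    have hP : (X^4 + C (mu - 2*(lam+1)) * X^3 + C (2*(lam^2+lam+1) - mu*(lam+1)) * X^2
        + C (lam*mu - 2*lam*(lam+1)) * X + C (lam^2) : ℂ[X]) = p₁ * p₂ := by
      rw [hp₁, hp₂]
      simp only [map_sub, map_add, map_mul, map_pow, map_one, map_ofNat]
      linear_combination (-X^3 + (C lam + 1) * X^2 - C lam * X) * hsumC - X^2 * hprodC
    rw [hP] at hz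
    have hprime : Prime (X - C z : ℂ[X]) := prime_X_sub_C z
    by_cases hd1 : (X - C z : ℂ[X]) ∣ p₁
    · by_cases hd2 : (X - C z : ℂ[X]) ∣ p₂
      · -- common root of both factors
        have e1 : p₁.eval z = 0 := dvd_iff_isRoot.mp hd1
        have e2 : p₂.eval z = 0 := dvd_iff_isRoot.mp hd2
        simp only [hp₁, hp₂, eval_add, eval_sub, eval_pow, eval_mul, eval_C, eval_X] at e1 e2
        have hzne : z ≠ 0 := by
          intro hz0
          apply h0
          rw [hz0] at e1
          linear_combination e1
        have hAB : A = B := by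
          have : (A - B) * z = 0 := by linear_combination e1 - e2
          rcases mul_eq_zero.mp this with h | h
          · exact sub_eq_zero.mp h
          · exact absurd h hzne
        have hsq : A^2 = (lam - 1)^2 := by rw [← hAB] at hprod; linear_combination hprod
        have : (A - (lam - 1)) * (A + (lam - 1)) = 0 := by linear_combination hsq
        rcases mul_eq_zero.mp this with h | h
        · right; right
          have : A = lam - 1 := by linear_combination h
          rw [← hsum, ← hAB, this]; ring
        · left
          have : A = -(lam - 1) := by linear_combination h
          rw [← hsum, ← hAB, this]; ring
      · -- (X - C z)^2 divides p₁
        have hdvd : (X - C z)^2 ∣ p₁ := hprime.pow_dvd_of_dvd_mul_right 2 hd2 hz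
        obtain ⟨e1, e2⟩ := dbl_eval hdvd
        simp only [hp₁, eval_add, eval_sub, eval_pow, eval_mul, eval_C, eval_X,
          derivative_add, derivative_sub, derivative_pow, derivative_mul, derivative_C,
          derivative_X, eval_one, eval_zero, Nat.cast_ofNat, pow_one] at e1 e2
        right; left
        apply aux_case lam mu A B z h1 hsum hprod
        · linear_combination e1
        · linear_combination e2
    · -- (X - C z)^2 divides p₂
      have hdvd : (X - C z)^2 ∣ p₂ := by
        apply hprime.pow_dvd_of_dvd_mul_left 2 hd1 hz
      obtain ⟨e1, e2⟩ := dbl_eval hdvd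
      simp only [hp₂, eval_add, eval_sub, eval_pow, eval_mul, eval_C, eval_X,
        derivative_add, derivative_sub, derivative_pow, derivative_mul, derivative_C,
        derivative_X, eval_one, eval_zero, Nat.cast_ofNat, pow_one] at e1 e2
      right; left
      apply aux_case lam mu B A z h1 (by rw [← hsum]; ring) (by rw [← hprod]; ring)
      · linear_combination e1
      · linear_combination e2
  · rintro (h | h | h)
    · -- mu = 2(1-lam): P = (X^2 - 2lam X + lam)^2
      obtain ⟨t, ht⟩ := IsAlgClosed.exists_pow_nat_eq (k := ℂ) (lam^2 - lam) (n := 2) (by norm_num)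
      refine ⟨lam + t, ?_⟩
      have hq : (X - C (lam + t)) ∣ (X^2 - C (2*lam) * X + C lam : ℂ[X]) := by
        rw [dvd_iff_isRoot]
        simp only [IsRoot, eval_add, eval_sub, eval_pow, eval_mul, eval_C, eval_X]
        linear_combination ht
      have hP : (X^4 + C (mu - 2*(lam+1)) * X^3 + C (2*(lam^2+lam+1) - mu*(lam+1)) * X^2
          + C (lam*mu - 2*lam*(lam+1)) * X + C (lam^2) : ℂ[X])
          = (X^2 - C (2*lam) * X + C lam)^2 := by
        subst h
        simp only [map_sub, map_add, map_mul, map_pow, map_one, map_ofNat]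
        ring
      rw [hP]
      exact pow_dvd_pow_of_dvd hq 2
    · -- mu = 2(1+lam): P = (X^2 - lam)^2
      obtain ⟨t, ht⟩ := IsAlgClosed.exists_pow_nat_eq (k := ℂ) lam (n := 2) (by norm_num)
      refine ⟨t, ?_⟩
      have hq : (X - C t) ∣ (X^2 - C lam : ℂ[X]) := by
        rw [dvd_iff_isRoot]
        simp only [IsRoot, eval_sub, eval_pow, eval_C, eval_X]
        linear_combination ht
      have hP : (X^4 + C (mu - 2*(lam+1)) * X^3 + C (2*(lam^2+lam+1) - mu*(lam+1)) * X^2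
          + C (lam*mu - 2*lam*(lam+1)) * X + C (lam^2) : ℂ[X])
          = (X^2 - C lam)^2 := by
        subst h
        simp only [map_sub, map_add, map_mul, map_pow, map_one, map_ofNat]
        ring
      rw [hP]
      exact pow_dvd_pow_of_dvd hq 2
    · -- mu = 2(lam-1): P = (X^2 - 2X + lam)^2
      obtain ⟨t, ht⟩ := IsAlgClosed.exists_pow_nat_eq (k := ℂ) (1 - lam) (n := 2) (by norm_num)
      refine ⟨1 + t, ?_⟩
      have hq : (X - C (1 + t)) ∣ (X^2 - C 2 * X + C lam : ℂ[X]) := by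
        rw [dvd_iff_isRoot]
        simp only [IsRoot, eval_add, eval_sub, eval_pow, eval_mul, eval_C, eval_X]
        linear_combination ht
      have hP : (X^4 + C (mu - 2*(lam+1)) * X^3 + C (2*(lam^2+lam+1) - mu*(lam+1)) * X^2
          + C (lam*mu - 2*lam*(lam+1)) * X + C (lam^2) : ℂ[X])
          = (X^2 - C 2 * X + C lam)^2 := by
        subst h
        simp only [map_sub, map_add, map_mul, map_pow, map_one, map_ofNat]
        ring
      rw [hP]
      exact pow_dvd_pow_of_dvd hq 2
end

section
/- There do not exist integers c₀, d₀, d₁, d₂ such that t^6 + 6t^5 + 15t^4 + 36t^3 + 15t^2 + 6t + 1 = (t^2 + 6c₀t + 1)(t^4 + 6d₀t^3 + (2+6d₁)t^2 + 6d₂t + 1) in ℤ[t]. -/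
/-!
Comparing the coefficients of `t^5`, `t` and `t^3` gives `c₀ + d₀ = 1`, `c₀ + d₂ = 1` and
`d₀ + d₂ + c₀ (2 + 6 d₁) = 6`, hence `6 c₀ d₁ = 4`, which has no integer solution.
-/

open Polynomial

theorem quadratic_mul_quartic {R : Type*} [CommRing R] (a b c d : R) :
    (X^2 + C a * X + 1) * (X^4 + C b * X^3 + C c * X^2 + C d * X + 1 : R[X])
      = X^6 + C (a + b) * X^5 + C (c + a * b + 1) * X^4 + C (d + a * c + b) * X^3
        + C (1 + a * d + c) * X^2 + C (a + d) * X + 1 := by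
  simp only [map_add, map_mul, map_one]
  ring

/-- There is no factorization
`t^6+6t^5+15t^4+36t^3+15t^2+6t+1 = (t^2+6c₀t+1)(t^4+6d₀t^3+(2+6d₁)t^2+6d₂t+1)`
with integers `c₀, d₀, d₁, d₂`. -/
theorem stmt_8 :
    ¬ ∃ c₀ d₀ d₁ d₂ : ℤ,
      (X^6 + 6*X^5 + 15*X^4 + 36*X^3 + 15*X^2 + 6*X + 1 : ℤ[X])
        = (X^2 + C (6*c₀) * X + 1)
          * (X^4 + C (6*d₀) * X^3 + C (2 + 6*d₁) * X^2 + C (6*d₂) * X + 1) := by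
  rintro ⟨c₀, d₀, d₁, d₂, h⟩
  rw [quadratic_mul_quartic] at h
  have coeff_eq (n : ℕ) := congrArg (coeff · n) h
  have h5 := coeff_eq 5
  have h3 := coeff_eq 3
  have h1 := coeff_eq 1
  simp only [coeff_add, coeff_ofNat_mul, coeff_C_mul, coeff_X_pow, coeff_X, coeff_one]
    at h5 h3 h1
  norm_num at h5 h3 h1
  have key : 36 * (c₀ * d₁) = 24 := by linear_combination h5 + h1 - h3
  omega
end
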